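/- arXiv:1405.6214 — 2 statements merged into one kernel-verified Lean document; each statement's English description precedes it below -/
import Mathlib

section
/- For all n ≥ 0 and i, j ∈ [0, d−1], a_{j,d}(a_{i,d}(n)) = d·a_{i,d}(n) + ((j − i) mod d). -/
/-- Sum of base-`d` digits of `n`. -/
def sdig (d n : ℕ) : ℕ := (Nat.digits d n).sum

/-- `t_d(n)`: base-`d` digit sum of `n`, reduced mod `d`. -/
def td (d n : ℕ) : ℕ := sdig d n % d

/-- `a_{j,d}(n)`: n-th natural (0-indexed, increasing) with base-`d` digit sum ≡ j mod d. -/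
noncomputable def agen (d j n : ℕ) : ℕ := Nat.nth (fun k => sdig d k % d = j) n

/-- n-th odious number (binary digit sum odd), 0-indexed increasing. -/
noncomputable def odious (n : ℕ) : ℕ := Nat.nth (fun k => (Nat.digits 2 k).sum % 2 = 1) n

/-- n-th evil number (binary digit sum even), 0-indexed increasing. -/
noncomputable def evil (n : ℕ) : ℕ := Nat.nth (fun k => (Nat.digits 2 k).sum % 2 = 0) n

/-- Thue–Morse sequence: parity of the binary digit sum. -/
def tm (n : ℕ) : ℕ := (Nat.digits 2 n).sum % 2

lemma sdig_block {d : ℕ} (hd : 2 ≤ d) (n r : ℕ) (hr : r < d) :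
    sdig d (d * n + r) = r + sdig d n := by
  rcases Nat.eq_zero_or_pos (d * n + r) with h | h
  · have hn : n = 0 := by
      rcases Nat.eq_zero_or_pos n with h' | h'
      · exact h'
      · exfalso; nlinarith
    have hr0 : r = 0 := by omega
    simp [hn, hr0, sdig]
  · unfold sdig
    rw [Nat.digits_def' (by omega : 1 < d) h]
    have h1 : (d * n + r) % d = r := by rw [Nat.mul_add_mod]; exact Nat.mod_eq_of_lt hr
    have h2 : (d * n + r) / d = n := by
      rw [Nat.mul_add_div (by omega), Nat.div_eq_of_lt hr]; omega
    rw [h1, h2, List.sum_cons]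

lemma uniq_k {d : ℕ} (hd : 2 ≤ d) (s j : ℕ) (hj : j < d) (k : ℕ) (hk : k < d) :
    (s + k) % d = j ↔ k = ((j : ZMod d) - (s : ZMod d)).val := by
  haveI : NeZero d := ⟨by omega⟩
  have hjj : j % d = j := Nat.mod_eq_of_lt hj
  constructor
  · intro h
    have h2 : ((s + k : ℕ) : ZMod d) = (j : ZMod d) :=
      (ZMod.natCast_eq_natCast_iff' _ _ _).mpr (by rw [h, hjj])
    push_cast at h2
    have h3 : ((k : ZMod d)) = (j : ZMod d) - (s : ZMod d) := by linear_combination h2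
    rw [← h3, ZMod.val_cast_of_lt hk]
  · intro h
    subst h
    have h2 : ((s + ((j : ZMod d) - (s : ZMod d)).val : ℕ) : ZMod d) = (j : ZMod d) := by
      push_cast
      rw [ZMod.natCast_rightInverse ((j : ZMod d) - (s : ZMod d))]
      ring
    have := (ZMod.natCast_eq_natCast_iff' _ _ _).mp h2
    rwa [hjj] at this

lemma filter_block {d : ℕ} (hd : 2 ≤ d) (j : ℕ) (hj : j < d) (n : ℕ) :
    (Finset.range d).filter (fun k => sdig d (d * n + k) % d = j)
      = {((j : ZMod d) - (sdig d n : ZMod d)).val} := by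
  haveI : NeZero d := ⟨by omega⟩
  ext k
  simp only [Finset.mem_filter, Finset.mem_range, Finset.mem_singleton]
  constructor
  · rintro ⟨hk, hpk⟩
    rw [sdig_block hd n k hk, Nat.add_comm k] at hpk
    exact (uniq_k hd _ j hj k hk).mp hpk
  · rintro rfl
    refine ⟨ZMod.val_lt _, ?_⟩
    rw [sdig_block hd n _ (ZMod.val_lt _), Nat.add_comm]
    exact (uniq_k hd _ j hj _ (ZMod.val_lt _)).mpr rfl

lemma count_mul {d : ℕ} (hd : 2 ≤ d) (j : ℕ) (hj : j < d) :
    ∀ n, Nat.count (fun k => sdig d k % d = j) (d * n) = n := by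
  intro n
  induction n with
  | zero => simp
  | succ n ih =>
    have : d * (n + 1) = d * n + d := by ring
    rw [this, Nat.count_add, ih, Nat.count_eq_card_filter_range, filter_block hd j hj n]
    simp

lemma count_at {d : ℕ} (hd : 2 ≤ d) (j : ℕ) (hj : j < d) (n : ℕ) :
    Nat.count (fun k => sdig d k % d = j) (d * n + ((j : ZMod d) - (sdig d n : ZMod d)).val) = n := by
  haveI : NeZero d := ⟨by omega⟩
  rw [Nat.count_add, count_mul hd j hj, Nat.count_eq_card_filter_range]
  have hempty : (Finset.range (((j : ZMod d) - (sdig d n : ZMod d)).val)).filter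
      (fun k => sdig d (d * n + k) % d = j) = ∅ := by
    ext k
    simp only [Finset.mem_filter, Finset.mem_range, Finset.notMem_empty, iff_false, not_and]
    intro hk hpk
    have hkd : k < d := lt_trans hk (ZMod.val_lt _)
    have : k ∈ (Finset.range d).filter (fun k => sdig d (d * n + k) % d = j) := by
      simp [Finset.mem_filter, Finset.mem_range, hkd, hpk]
    rw [filter_block hd j hj n] at this
    simp at this
    omega
  rw [hempty]
  simp

lemma agen_eq {d : ℕ} (hd : 2 ≤ d) (j : ℕ) (hj : j < d) (n : ℕ) :
    agen d j n = d * n + ((j : ZMod d) - (sdig d n : ZMod d)).val := by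
  haveI : NeZero d := ⟨by omega⟩
  have hp : sdig d (d * n + ((j : ZMod d) - (sdig d n : ZMod d)).val) % d = j := by
    rw [sdig_block hd n _ (ZMod.val_lt _), Nat.add_comm]
    exact (uniq_k hd _ j hj _ (ZMod.val_lt _)).mpr rfl
  have := Nat.nth_count (p := fun k => sdig d k % d = j) hp
  rw [count_at hd j hj n] at this
  exact this

theorem stmt2 (d : ℕ) (hd : 2 ≤ d) (i j : ℕ) (hi : i ≤ d - 1) (hj : j ≤ d - 1) (n : ℕ) :
    (agen d j (agen d i n) : ℤ) = d * agen d i n + ((j : ℤ) - i) % d := by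
  haveI : NeZero d := ⟨by omega⟩
  have hi' : i < d := by omega
  have hj' : j < d := by omega
  set m := agen d i n with hmdef
  have hm : m = d * n + ((i : ZMod d) - (sdig d n : ZMod d)).val := agen_eq hd i hi' n
  have hsm : sdig d m % d = i := by
    rw [hm, sdig_block hd n _ (ZMod.val_lt _), Nat.add_comm]
    exact (uniq_k hd _ i hi' _ (ZMod.val_lt _)).mpr rfl
  have hcast : ((sdig d m : ℕ) : ZMod d) = (i : ZMod d) := by
    rw [← hsm]; exact (ZMod.natCast_mod _ _).symm
  have h2 : agen d j m = d * m + ((j : ZMod d) - (i : ZMod d)).val := by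
    rw [agen_eq hd j hj' m, hcast]
  have hval : ((((j : ZMod d) - (i : ZMod d)).val : ℕ) : ℤ) = ((j : ℤ) - i) % d := by
    set c : ZMod d := (j : ZMod d) - (i : ZMod d) with hc
    have hcc : (((j : ℤ) - i : ℤ) : ZMod d) = (((c.val : ℕ) : ℤ) : ZMod d) := by
      push_cast
      rw [hc, ZMod.natCast_rightInverse c]
    have key : ((j : ℤ) - i) % d = ((c.val : ℕ) : ℤ) % d :=
      (ZMod.intCast_eq_intCast_iff' _ _ _).mp hcc
    have hlt : ((c.val : ℕ) : ℤ) % d = ((c.val : ℕ) : ℤ) :=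
      Int.emod_eq_of_lt (Int.natCast_nonneg _) (by exact_mod_cast ZMod.val_lt c)
    rw [key, hlt]
  rw [h2]
  push_cast
  rw [hval]
end

section
/- For every natural number n, the n-th evil number equals 2n + t(n), where t(n) is the Thue–Morse sequence. -/
lemma tm_two_mul (n : ℕ) : tm (2 * n) = tm n := by
  rcases Nat.eq_zero_or_pos n with h | h
  · simp [h, tm]
  · unfold tm
    rw [Nat.digits_def' (by norm_num) (by omega)]
    simp [Nat.mul_div_cancel_left _ (by norm_num : 0 < 2), Nat.mul_mod_right]

lemma tm_two_mul_add_one (n : ℕ) : tm (2 * n + 1) = (tm n + 1) % 2 := by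
  unfold tm
  rw [Nat.digits_def' (by norm_num) (by omega)]
  have h1 : (2 * n + 1) % 2 = 1 := by omega
  have h2 : (2 * n + 1) / 2 = n := by omega
  rw [h1, h2]
  simp [Nat.add_mod, Nat.add_comm]

lemma tm_lt_two (n : ℕ) : tm n < 2 := Nat.mod_lt _ (by norm_num)

lemma count_two_mul (n : ℕ) :
    Nat.count (fun k => (Nat.digits 2 k).sum % 2 = 0) (2 * n) = n := by
  induction n with
  | zero => simp
  | succ m ih =>
    have : 2 * (m + 1) = (2 * m + 1) + 1 := by ring
    rw [this, Nat.count_succ, Nat.count_succ, ih]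
    have h1 : (Nat.digits 2 (2 * m)).sum % 2 = tm m := tm_two_mul m
    have h2 : (Nat.digits 2 (2 * m + 1)).sum % 2 = (tm m + 1) % 2 := tm_two_mul_add_one m
    have hb := tm_lt_two m
    rcases (by omega : tm m = 0 ∨ tm m = 1) with h | h <;>
      simp only [h1, h2, h] <;> norm_num

theorem stmt7 (n : ℕ) : evil n = 2 * n + tm n := by
  have hb := tm_lt_two n
  rcases (by omega : tm n = 0 ∨ tm n = 1) with h | h <;> rw [h]
  · have hp : (Nat.digits 2 (2 * n)).sum % 2 = 0 := by
      show tm (2 * n) = 0; rw [tm_two_mul n]; exact h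
    have := Nat.nth_count (p := fun k => (Nat.digits 2 k).sum % 2 = 0) hp
    rw [count_two_mul] at this
    simpa [evil] using this
  · have hp : (Nat.digits 2 (2 * n + 1)).sum % 2 = 0 := by
      show tm (2 * n + 1) = 0; rw [tm_two_mul_add_one n, h]
    have hc : Nat.count (fun k => (Nat.digits 2 k).sum % 2 = 0) (2 * n + 1) = n := by
      rw [Nat.count_succ, count_two_mul]
      have h1 : (Nat.digits 2 (2 * n)).sum % 2 = tm n := tm_two_mul n
      simp only [h1, h]
      norm_num
    have := Nat.nth_count (p := fun k => (Nat.digits 2 k).sum % 2 = 0) hp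
    rw [hc] at this
    simpa [evil] using this
end
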